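/- Let λ_j, μ_k be real sequences satisfying 0 < 2^{j+1}|λ_j| < |μ_j| and 2^{j+2}|μ_j| < |λ_{j+1}| for all j ≥ 0, and let f : ℝ → ℂ satisfy |f(λ_j) − λ_j| < 2^{−j−1}|λ_j| and |f(μ_j) + μ_j| < 2^{−j−1}|μ_j| for all j. Set m_{jk} = (f(λ_j) − f(μ_k))/(λ_j − μ_k). Then |m_{jk} − sgn(j − k − 1/2)| ≤ 4·2^{−max(j,k)} for all j, k ≥ 0. -/

import Mathlib

private lemma aux_zpow (n : ℕ) : (2:ℝ) ^ (-(n:ℤ)) = ((2:ℝ) ^ n)⁻¹ := by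
  rw [zpow_neg, zpow_natCast]

private lemma aux_zpow' (n : ℕ) : (2:ℝ) ^ (-(n:ℤ) - 1) = ((2:ℝ) ^ (n+1))⁻¹ := by
  rw [show (-(n:ℤ) - 1) = -((n+1:ℕ):ℤ) by push_cast; ring, zpow_neg, zpow_natCast]

private lemma aux_abs_div (F : ℂ) (u v : ℝ) (h : v ≠ u) (c : ℂ) :
    ‖F / ((u:ℂ) - v) - c‖ = ‖F - c * ((u:ℂ) - v)‖ / |u - v| := by
  have hd : ((u:ℂ) - v) ≠ 0 := sub_ne_zero.mpr (by exact_mod_cast (Ne.symm h))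
  have h1 : F / ((u:ℂ) - v) - c = (F - c * ((u:ℂ) - v)) / ((u:ℂ) - v) := by
    field_simp
  rw [h1, norm_div, show ((u:ℂ) - v) = ((u - v : ℝ) : ℂ) by push_cast; ring,
    Complex.norm_real, Real.norm_eq_abs]

private lemma aux_tri (X Y W : ℂ) :
    ‖X - Y + W‖ ≤ ‖X‖ + ‖Y‖ + ‖W‖ := by
  calc ‖X - Y + W‖ ≤ ‖X - Y‖ + ‖W‖ :=
        norm_add_le _ _
    _ ≤ ‖X‖ + ‖Y‖ + ‖W‖ := by
        have : ‖X - Y‖ ≤ ‖X‖ + ‖Y‖ := by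
          rw [sub_eq_add_neg]
          refine (norm_add_le _ _).trans ?_
          rw [norm_neg]
        linarith

theorem stmt14 (l μ : ℕ → ℝ) (f : ℝ → ℂ)
    (h1 : ∀ j : ℕ, 0 < 2 ^ (j + 1) * |l j| ∧ 2 ^ (j + 1) * |l j| < |μ j|)
    (h2 : ∀ j : ℕ, 2 ^ (j + 2) * |μ j| < |l (j + 1)|)
    (h3 : ∀ j : ℕ, ‖f (l j) - (l j : ℂ)‖ < 2 ^ (-(j : ℤ) - 1) * |l j|)
    (h4 : ∀ j : ℕ, ‖f (μ j) + (μ j : ℂ)‖ < 2 ^ (-(j : ℤ) - 1) * |μ j|) :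
    ∀ j k : ℕ,
      ‖(f (l j) - f (μ k)) / ((l j : ℂ) - (μ k : ℂ)) -
          (if k < j then 1 else -1)‖ ≤ 4 * 2 ^ (-(max j k : ℤ)) := by
  have hpow : ∀ n : ℕ, (0:ℝ) < 2 ^ n := fun n => pow_pos (by norm_num) n
  have hpow1 : ∀ n : ℕ, (1:ℝ) ≤ 2 ^ n := by
    intro n
    induction n with
    | zero => norm_num
    | succ m ih => rw [pow_succ]; nlinarith
  have hpow2 : ∀ n : ℕ, (2:ℝ) ≤ 2 ^ (n+1) := by
    intro n
    calc (2:ℝ) = 2^1 := by norm_num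
      _ ≤ 2^(n+1) := pow_le_pow_right₀ (by norm_num) (by omega)
  have hl0 : ∀ n, 0 < |l n| := by
    intro n
    nlinarith [(h1 n).1, abs_nonneg (l n), hpow (n+1)]
  have hμ0 : ∀ n, 0 < |μ n| := fun n => lt_trans (h1 n).1 (h1 n).2
  have hstep1 : ∀ n, |l n| < |μ n| := by
    intro n
    nlinarith [(h1 n).2, hpow1 (n+1), hl0 n]
  have hstep2 : ∀ n, |μ n| < |l (n+1)| := by
    intro n
    nlinarith [h2 n, hpow1 (n+2), hμ0 n]
  have hlmono : Monotone (fun n => |l n|) :=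
    monotone_nat_of_le_succ (fun n => le_of_lt (lt_trans (hstep1 n) (hstep2 n)))
  have hμmono : Monotone (fun n => |μ n|) :=
    monotone_nat_of_le_succ (fun n => le_of_lt (lt_trans (hstep2 n) (hstep1 (n+1))))
  intro j k
  by_cases hjk : k < j
  · -- sign = 1, max = j
    obtain ⟨i, rfl⟩ : ∃ i, j = i + 1 := ⟨j - 1, by omega⟩
    have hki : k ≤ i := by omega
    rw [if_pos hjk,
      show (((i+1:ℕ):ℤ) ⊔ ((k:ℕ):ℤ)) = ((i+1:ℕ):ℤ) from
        max_eq_left (by exact_mod_cast hjk.le),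
      aux_zpow]
    set e : ℝ := 2 ^ (i+1) with he
    have hepos : (0:ℝ) < e := hpow (i+1)
    set L : ℝ := |l (i+1)| with hL
    set M : ℝ := |μ k| with hM
    set N1 : ℝ := ‖f (l (i+1)) - (l (i+1) : ℂ)‖ with hN1
    set N2 : ℝ := ‖f (μ k) + (μ k : ℂ)‖ with hN2
    have hLpos : 0 < L := hl0 _
    have hMpos : 0 < M := hμ0 _
    have hN1nn : 0 ≤ N1 := norm_nonneg _
    have hN2nn : 0 ≤ N2 := norm_nonneg _
    -- N1 * (e*2) < L
    have f1 : N1 * (e * 2) < L := by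
      have := h3 (i+1)
      rw [aux_zpow'] at this
      rw [show e * 2 = 2 ^ (i+1+1) by rw [pow_succ]]
      have h2p := hpow (i+1+1)
      rw [inv_mul_eq_div, lt_div_iff₀ h2p] at this
      exact this
    -- N2 * 2 < M
    have f2 : N2 * 2 < M := by
      have := h4 k
      rw [aux_zpow'] at this
      have h2p := hpow (k+1)
      rw [inv_mul_eq_div, lt_div_iff₀ h2p] at this
      nlinarith [hpow2 k]
    -- (e*2) * M < L
    have f3 : e * 2 * M < L := by
      have hh := h2 i
      have hmm : M ≤ |μ i| := hμmono hki
      have : (2:ℝ) ^ (i+2) = e * 2 := by rw [he, pow_succ]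
      rw [this] at hh
      nlinarith
    have hML : M < L := by nlinarith [hpow1 (i+1)]
    have hne : μ k ≠ l (i+1) := by
      intro hh
      rw [hM, hh] at hML
      exact lt_irrefl _ (hML.trans_le (le_of_eq hL.symm)) |>.elim
    rw [aux_abs_div _ _ _ hne, one_mul]
    have hnum : ‖f (l (i+1)) - f (μ k) - ((l (i+1) : ℂ) - (μ k : ℂ))‖
        ≤ N1 + N2 + 2 * M := by
      have heq : f (l (i+1)) - f (μ k) - ((l (i+1) : ℂ) - (μ k : ℂ))
          = (f (l (i+1)) - (l (i+1):ℂ)) - (f (μ k) + (μ k:ℂ)) + 2 * (μ k : ℂ) := by ring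
      rw [heq]
      have := aux_tri (f (l (i+1)) - (l (i+1):ℂ)) (f (μ k) + (μ k:ℂ)) (2 * (μ k : ℂ))
      have habs2 : ‖2 * (μ k : ℂ)‖ = 2 * M := by
        rw [norm_mul, Complex.norm_two, Complex.norm_real, Real.norm_eq_abs]
      rw [habs2] at this
      exact this
    have hden : L - M ≤ |l (i+1) - μ k| := by
      have := abs_sub_abs_le_abs_sub (l (i+1)) (μ k)
      linarith
    have hdenpos : 0 < |l (i+1) - μ k| := by linarith
    rw [div_le_iff₀ hdenpos]
    -- goal : abs num ≤ 4 * e⁻¹ * |l (i+1) - μ k|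
    rw [show (4:ℝ) * e⁻¹ = 4 / e by ring, div_mul_eq_mul_div, le_div_iff₀ hepos]
    nlinarith [mul_le_mul_of_nonneg_right hnum hepos.le,
      mul_lt_mul_of_pos_right f2 hepos,
      mul_pos hMpos hepos, hpow2 i]
  · -- j ≤ k, sign = -1, max = k
    have hjk' : j ≤ k := by omega
    rw [if_neg hjk,
      show (((j:ℕ):ℤ) ⊔ ((k:ℕ):ℤ)) = ((k:ℕ):ℤ) from
        max_eq_right (by exact_mod_cast hjk'),
      aux_zpow]
    set e : ℝ := 2 ^ k with he
    have hepos : (0:ℝ) < e := hpow k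
    set A : ℝ := |l j| with hA
    set B : ℝ := |μ k| with hB
    set N1 : ℝ := ‖f (l j) - (l j : ℂ)‖ with hN1
    set N2 : ℝ := ‖f (μ k) + (μ k : ℂ)‖ with hN2
    have hApos : 0 < A := hl0 _
    have hBpos : 0 < B := hμ0 _
    have hN1nn : 0 ≤ N1 := norm_nonneg _
    have hN2nn : 0 ≤ N2 := norm_nonneg _
    have f1 : N1 * 2 < A := by
      have := h3 j
      rw [aux_zpow'] at this
      have h2p := hpow (j+1)
      rw [inv_mul_eq_div, lt_div_iff₀ h2p] at this
      nlinarith [hpow2 j]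
    have f2 : N2 * (e * 2) < B := by
      have := h4 k
      rw [aux_zpow'] at this
      rw [show e * 2 = 2 ^ (k+1) by rw [pow_succ]]
      have h2p := hpow (k+1)
      rw [inv_mul_eq_div, lt_div_iff₀ h2p] at this
      exact this
    have f3 : e * 2 * A < B := by
      have hh := (h1 k).2
      have hmm : A ≤ |l k| := hlmono hjk'
      have : (2:ℝ) ^ (k+1) = e * 2 := by rw [he, pow_succ]
      rw [this] at hh
      nlinarith
    have hAB : A < B := by nlinarith [hpow1 k]
    have hne : μ k ≠ l j := by
      intro hh
      rw [hB, hh] at hAB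
      exact lt_irrefl _ (hAB.trans_le (le_of_eq hA.symm)) |>.elim
    rw [aux_abs_div _ _ _ hne, neg_one_mul]
    have hnum : ‖f (l j) - f (μ k) - -((l j : ℂ) - (μ k : ℂ))‖
        ≤ N1 + N2 + 2 * A := by
      have heq : f (l j) - f (μ k) - -((l j : ℂ) - (μ k : ℂ))
          = (f (l j) - (l j:ℂ)) - (f (μ k) + (μ k:ℂ)) + 2 * (l j : ℂ) := by ring
      rw [heq]
      have := aux_tri (f (l j) - (l j:ℂ)) (f (μ k) + (μ k:ℂ)) (2 * (l j : ℂ))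
      have habs2 : ‖2 * (l j : ℂ)‖ = 2 * A := by
        rw [norm_mul, Complex.norm_two, Complex.norm_real, Real.norm_eq_abs]
      rw [habs2] at this
      exact this
    have hden : B - A ≤ |l j - μ k| := by
      have := abs_sub_abs_le_abs_sub (μ k) (l j)
      rw [abs_sub_comm] at this
      linarith
    have hdenpos : 0 < |l j - μ k| := by linarith
    rw [div_le_iff₀ hdenpos]
    rw [show (4:ℝ) * e⁻¹ = 4 / e by ring, div_mul_eq_mul_div, le_div_iff₀ hepos]
    nlinarith [mul_le_mul_of_nonneg_right hnum hepos.le,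
      mul_lt_mul_of_pos_right f1 hepos,
      mul_pos hApos hepos, hpow1 k]
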